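/- In Example 1, if player 1 misreports the deterministic distribution f′_1 with f′_1(1)=1, her Shapley value under the resulting (misreported) characteristic function becomes 67/192, which exceeds her truthful Shapley value 47/192. -/

import Mathlib

/-- The Shapley value of player `i` in the cooperative game `(N, v)`. -/
def shapley {α : Type*} [DecidableEq α] (N : Finset α) (v : Finset α → ℚ) (i : α) : ℚ :=
  ∑ S ∈ (N.erase i).powerset,
    ((S.card.factorial * (N.card - S.card - 1).factorial : ℕ) : ℚ) / (N.card.factorial : ℚ) *
      (v (insert i S) - v S)

/-- The characteristic function of Example 1 induced by player 1's misreport `f′₁(1) = 1`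
(players 1,2,3,4 are `0,1,2,3 : Fin 4`). -/
def vMis (S : Finset (Fin 4)) : ℚ :=
  if S = {0, 2} ∨ S = {0, 1, 2} ∨ S = {0, 2, 3} ∨ S = {0, 1, 2, 3} then 3/4
  else if S = {0, 3} ∨ S = {0, 1, 3} then 1/4
  else if S = {1, 2} ∨ S = {1, 2, 3} then 3/16
  else if S = {1, 3} then 1/16
  else 0

/-! In a four-player game a coalition of size `s` not containing the player carries the weight
`s! (3 - s)! / 4!`, i.e. `1/4, 1/12, 1/12, 1/4` for `s = 0, 1, 2, 3`. Under the misreport, player 1's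
marginal contributions are `0`; `0, 3/4, 1/4`; `9/16, 3/16, 3/4`; `9/16`, so her Shapley value is
`(1 + 24/16) / 12 + (9/16) / 4 = 67/192`. -/

theorem shapley_fin_four_zero (v : Finset (Fin 4) → ℚ) :
    shapley Finset.univ v 0 =
      (v {0} - v ∅) / 4
      + (v {0, 1} - v {1} + (v {0, 2} - v {2}) + (v {0, 3} - v {3})) / 12
      + (v {0, 1, 2} - v {1, 2} + (v {0, 1, 3} - v {1, 3}) + (v {0, 2, 3} - v {2, 3})) / 12
      + (v {0, 1, 2, 3} - v {1, 2, 3}) / 4 := by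
  have hsubsets : (Finset.univ.erase (0 : Fin 4)).powerset =
      {∅, {1}, {2}, {3}, {1, 2}, {1, 3}, {2, 3}, {1, 2, 3}} := by decide
  rw [shapley, hsubsets]
  repeat rw [Finset.sum_insert (by decide)]
  rw [Finset.sum_singleton]
  norm_num (config := { decide := true }) [Finset.card_insert_of_notMem, Nat.factorial]
  ring

/-- Under the misreport, player 1's Shapley value becomes 67/192, exceeding her truthful
Shapley value 47/192. -/
theorem shapley_misreport_ex1 :
    shapley Finset.univ vMis 0 = 67/192 ∧ (47/192 : ℚ) < 67/192 := by
  refine ⟨?_, by norm_num⟩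
  rw [shapley_fin_four_zero]
  simp only [vMis]
  norm_num (config := { decide := true })
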